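/- arXiv:1303.0669 — 2 statements merged into one kernel-verified Lean document; each statement's English description precedes it below -/
import Mathlib

section
/- Let P and Q be probability distributions on finite sets with H(Q) > 0, and let a > 0. If a < H(P)/H(Q), then lim_{n→∞} F^D(P^n → Q^{⌊an⌋}) = lim_{n→∞} F^M(P^n → Q^{⌊an⌋}) = 1; if a > H(P)/H(Q), then lim_{n→∞} F^D(P^n → Q^{⌊an⌋}) = lim_{n→∞} F^M(P^n → Q^{⌊an⌋}) = 0 (in particular all these limits exist). -/
/-!
By the asymptotic equipartition property (here Chebyshev's inequality for `-log P^n`, whose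
variance is `n V(P)`), `P^n` puts almost all of its mass on about `exp (n H(P))` atoms of size
about `exp (-n H(P))`, and likewise for `Q^L` with `L ≈ a n`.

If `a H(Q) < H(P)`, the typical atoms of `P^n` are much smaller than those of `Q^L`, so they can
be packed greedily into the fibres of a map onto the typical set of `Q^L`, reproducing `Q^L` up to
a vanishing error: `F^D → 1`, and `F^D ≤ F^M ≤ 1`.

If `a H(Q) > H(P)`, every `P'` majorizing `P^n` puts almost all of its mass on about
`exp (n H(P))` points, which carry vanishing `Q^L`-mass; Cauchy–Schwarz on these points and on
their complement gives `F^M → 0`, and `0 ≤ F^D ≤ F^M`.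
-/

open MeasureTheory Filter

namespace RNG

variable {α β : Type*}

/-- `P` is a probability distribution on the finite set `α`. -/
def IsProb [Fintype α] (P : α → ℝ) : Prop :=
  (∀ x, 0 ≤ P x) ∧ ∑ x, P x = 1

open Classical in
/-- Pushforward distribution `W(P)(y) = ∑_{x : W x = y} P x`. -/
noncomputable def push [Fintype α] (W : α → β) (P : α → ℝ) : β → ℝ :=
  fun y => ∑ x, if W x = y then P x else 0

/-- Fidelity (Bhattacharyya coefficient) between distributions on the same finite set. -/
noncomputable def fid [Fintype β] (R S : β → ℝ) : ℝ :=
  ∑ y, Real.sqrt (R y * S y)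

/-- Sum of the `l` largest values of `P`, i.e. the `l`-th partial sum of the
decreasing rearrangement of `P` (padded with zeros). -/
noncomputable def topSum [Fintype α] (P : α → ℝ) (l : ℕ) : ℝ :=
  sSup {s : ℝ | ∃ A : Finset α, A.card ≤ l ∧ s = ∑ x ∈ A, P x}

/-- Majorization `P ≺ P'` (the distributions may live on different finite sets). -/
def Maj [Fintype α] [Fintype β] (P : α → ℝ) (P' : β → ℝ) : Prop :=
  ∀ l : ℕ, topSum P l ≤ topSum P' l

/-- Maximal fidelity under deterministic transformations,
`F^D(P → Q) = max {F(W(P), Q) | W : α → β}`. -/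
noncomputable def FD [Fintype α] [Fintype β] (P : α → ℝ) (Q : β → ℝ) : ℝ :=
  sSup {r : ℝ | ∃ W : α → β, r = fid (push W P) Q}

/-- Maximal fidelity under the majorization condition,
`F^M(P → Q) = max {F(P', Q) | P ≺ P', P'` a distribution on the target set`}`. -/
noncomputable def FM [Fintype α] [Fintype β] (P : α → ℝ) (Q : β → ℝ) : ℝ :=
  sSup {r : ℝ | ∃ P' : β → ℝ, IsProb P' ∧ Maj P P' ∧ r = fid P' Q}

/-- Shannon entropy (natural logarithm). -/
noncomputable def H [Fintype α] (P : α → ℝ) : ℝ := ∑ x, -(P x * Real.log (P x))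

/-- Varentropy `V(P)` (natural logarithm). -/
noncomputable def V [Fintype α] (P : α → ℝ) : ℝ :=
  ∑ x, P x * (-Real.log (P x) - H P) ^ 2

/-- Shannon entropy, base-2 logarithm. -/
noncomputable def H2 [Fintype α] (P : α → ℝ) : ℝ := ∑ x, -(P x * Real.logb 2 (P x))

/-- Varentropy, base-2 logarithm. -/
noncomputable def V2 [Fintype α] (P : α → ℝ) : ℝ :=
  ∑ x, P x * (-Real.logb 2 (P x) - H2 P) ^ 2

/-- The `n`-fold i.i.d. product distribution `P^n`. -/
noncomputable def iid [Fintype α] (P : α → ℝ) (n : ℕ) : (Fin n → α) → ℝ :=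
  fun f => ∏ i, P (f i)

/-- The uniform distribution on a two-element set. -/
noncomputable def U2 : Fin 2 → ℝ := fun _ => 1 / 2

/-- Density of the normal distribution `N(m, v)`. -/
noncomputable def normalPDF (m v t : ℝ) : ℝ :=
  (Real.sqrt (2 * Real.pi * v))⁻¹ * Real.exp (-(t - m) ^ 2 / (2 * v))

/-- Standard normal cumulative distribution function `G`. -/
noncomputable def stdG (x : ℝ) : ℝ := ∫ t in Set.Iic x, normalPDF 0 1 t

/-- Density `N_P` of `N(0, V(P))`. -/
noncomputable def NP [Fintype α] (P : α → ℝ) (x : ℝ) : ℝ := normalPDF 0 (V P) x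

/-- Density `N_{P,Q,b}` of `N(H(Q)b, (H(P)/H(Q))·V(Q))`. -/
noncomputable def NPQ [Fintype α] [Fintype β] (P : α → ℝ) (Q : β → ℝ) (b x : ℝ) : ℝ :=
  normalPDF (H Q * b) (H P / H Q * V Q) x

/-- Cdf `G_P(x) = G(x/√V(P))`. -/
noncomputable def GP [Fintype α] (P : α → ℝ) (x : ℝ) : ℝ := stdG (x / Real.sqrt (V P))

/-- Cdf `G_{P,Q,b}(x) = G(√(H(Q)/(H(P)V(Q)))·(x − H(Q)b))`. -/
noncomputable def GPQ [Fintype α] [Fintype β] (P : α → ℝ) (Q : β → ℝ) (b x : ℝ) : ℝ :=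
  stdG (Real.sqrt (H Q / (H P * V Q)) * (x - H Q * b))

/-- `I_{P,Q,b}(x) = ∫_{−∞}^x √(N_P(t) N_{P,Q,b}(t)) dt`. -/
noncomputable def IPQ [Fintype α] [Fintype β] (P : α → ℝ) (Q : β → ℝ) (b x : ℝ) : ℝ :=
  ∫ t in Set.Iic x, Real.sqrt (NP P t * NPQ P Q b t)

/-- `I_{P,Q,b}(∞) = ∫_ℝ √(N_P(t) N_{P,Q,b}(t)) dt`. -/
noncomputable def IPQinf [Fintype α] [Fintype β] (P : α → ℝ) (Q : β → ℝ) (b : ℝ) : ℝ :=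
  ∫ t : ℝ, Real.sqrt (NP P t * NPQ P Q b t)

/-- `L^D_n(P,Q|ν)`: the maximal `L` with `F^D(P^n → Q^L) ≥ ν`. -/
noncomputable def LD [Fintype α] [Fintype β] (P : α → ℝ) (Q : β → ℝ) (ν : ℝ) (n : ℕ) : ℕ :=
  sSup {L : ℕ | ν ≤ FD (iid P n) (iid Q L)}

/-- The optimal second order rate `R^D_2(P,Q|ν)`. -/
noncomputable def RD2 [Fintype α] [Fintype β] (P : α → ℝ) (Q : β → ℝ) (ν : ℝ) : ℝ :=
  sSup {b : ℝ | ∃ c : ℝ, ν ≤ c ∧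
    Tendsto (fun n : ℕ =>
      FD (iid P n) (iid Q (⌊H P / H Q * n + b * Real.sqrt n⌋₊))) atTop (nhds c)}

open Finset

section Basic

variable [Fintype α]

lemma nonempty_of_isProb {P : α → ℝ} (hP : IsProb P) : Nonempty α := by
  by_contra h
  simpa [not_nonempty_iff.mp h] using hP.2

lemma sum_le_one_of_isProb {P : α → ℝ} (hP : IsProb P) (A : Finset α) : ∑ x ∈ A, P x ≤ 1 :=
  hP.2 ▸ sum_le_sum_of_subset_of_nonneg (subset_univ A) fun x _ _ => hP.1 x

lemma one_sub_le_sum_filter {P : α → ℝ} (hP : IsProb P) {p : α → Prop} [DecidablePred p]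
    {ε : ℝ} (h : ∑ x with ¬ p x, P x ≤ ε) : 1 - ε ≤ ∑ x with p x, P x := by
  rw [← hP.2, ← sum_filter_add_sum_filter_not univ p]
  linarith

lemma card_filter_lt_mul_le_one {P : α → ℝ} (hP : IsProb P) (τ : ℝ) :
    #{x | τ < P x} * τ ≤ 1 :=
  calc #{x | τ < P x} * τ = ∑ x with τ < P x, τ := by rw [sum_const, nsmul_eq_mul]
    _ ≤ ∑ x with τ < P x, P x := sum_le_sum fun x hx => (mem_filter.mp hx).2.le
    _ ≤ 1 := sum_le_one_of_isProb hP _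

lemma sum_le_sum_filter_add_card_mul {P : α → ℝ} (hP : ∀ x, 0 ≤ P x) (τ : ℝ) {K : ℕ}
    {A : Finset α} (hA : #A ≤ K) (hτ : 0 ≤ τ) :
    ∑ x ∈ A, P x ≤ ∑ x with τ ≤ P x, P x + K * τ := by
  rw [← sum_filter_add_sum_filter_not A (fun x => τ ≤ P x)]
  refine add_le_add (sum_le_sum_of_subset_of_nonneg (filter_subset_filter _ (subset_univ A))
    fun x _ _ => hP x) ?_
  calc ∑ x ∈ A with ¬ τ ≤ P x, P x ≤ ∑ x ∈ A with ¬ τ ≤ P x, τ :=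
        sum_le_sum fun x hx => (not_le.mp (mem_filter.mp hx).2).le
    _ ≤ K * τ := by
        rw [sum_const, nsmul_eq_mul]
        gcongr
        exact_mod_cast (card_filter_le A _).trans hA

lemma H_nonneg {P : α → ℝ} (hP : IsProb P) : 0 ≤ H P :=
  sum_nonneg fun x _ => neg_nonneg.mpr <|
    mul_nonpos_of_nonneg_of_nonpos (hP.1 x) (Real.log_nonpos (hP.1 x) (hP.2 ▸
      single_le_sum (fun y _ => hP.1 y) (mem_univ x)))

lemma sum_mul_neg_log_sub_H {P : α → ℝ} (hP : IsProb P) :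
    ∑ a, P a * (-Real.log (P a) - H P) = 0 := by
  simp only [mul_sub, sum_sub_distrib, ← sum_mul, hP.2, H]
  ring_nf

end Basic

section Product

variable [Fintype α]

lemma sum_iid_succ (P : α → ℝ) (n : ℕ) (f : (Fin (n + 1) → α) → ℝ) :
    ∑ x, iid P (n + 1) x * f x = ∑ a, ∑ x, P a * iid P n x * f (Fin.cons a x) := by
  rw [← (Fin.consEquiv fun _ => α).sum_comp, Fintype.sum_prod_type]
  simp [iid, Fin.consEquiv, Fin.prod_univ_succ, mul_assoc]

lemma sum_iid {P : α → ℝ} (hP : IsProb P) (n : ℕ) : ∑ x, iid P n x = 1 := by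
  induction n with
  | zero => simp [iid]
  | succ n ih =>
    simpa [← sum_mul, ← mul_sum, ih, hP.2] using sum_iid_succ P n fun _ => 1

lemma isProb_iid {P : α → ℝ} (hP : IsProb P) (n : ℕ) : IsProb (iid P n) :=
  ⟨fun x => prod_nonneg fun i _ => hP.1 (x i), sum_iid hP n⟩

lemma sum_iid_mul_sum_eq_zero {P : α → ℝ} (hP : IsProb P) {t : α → ℝ}
    (ht : ∑ a, P a * t a = 0) (n : ℕ) : ∑ x, iid P n x * ∑ i, t (x i) = 0 := by
  induction n with
  | zero => simp
  | succ n ih =>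
    have hfiber (a : α) : ∑ x, P a * iid P n x * (t a + ∑ i, t (x i)) = P a * t a := by
      simp only [mul_add, sum_add_distrib, ← sum_mul, mul_assoc, ← mul_sum, sum_iid hP, ih]
      ring
    simp_rw [sum_iid_succ, Fin.sum_univ_succ, Fin.cons_zero, Fin.cons_succ, hfiber, ht]

lemma sum_iid_mul_sum_sq {P : α → ℝ} (hP : IsProb P) {t : α → ℝ}
    (ht : ∑ a, P a * t a = 0) (n : ℕ) :
    ∑ x, iid P n x * (∑ i, t (x i)) ^ 2 = n * ∑ a, P a * t a ^ 2 := by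
  induction n with
  | zero => simp
  | succ n ih =>
    have hfiber (a : α) : ∑ x, P a * iid P n x * (t a + ∑ i, t (x i)) ^ 2
        = P a * t a ^ 2 + P a * (n * ∑ a, P a * t a ^ 2) := by
      have hcross : ∑ x, iid P n x * (2 * (t a * ∑ i, t (x i)))
          = 2 * t a * ∑ x, iid P n x * ∑ i, t (x i) := by
        rw [mul_sum]
        exact sum_congr rfl fun x _ => by ring
      simp only [add_sq, mul_add, sum_add_distrib, mul_assoc, ← mul_sum, ← sum_mul, sum_iid hP,
        ih, hcross, sum_iid_mul_sum_eq_zero hP ht n]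
      ring
    simp_rw [sum_iid_succ, Fin.sum_univ_succ, Fin.cons_zero, Fin.cons_succ, hfiber,
      sum_add_distrib, ← sum_mul, hP.2]
    push_cast
    ring

lemma log_iid {P : α → ℝ} {n : ℕ} {x : Fin n → α} (hx : 0 < iid P n x) :
    Real.log (iid P n x) = ∑ i, Real.log (P (x i)) :=
  Real.log_prod fun i _ hi => hx.ne' (prod_eq_zero (mem_univ i) hi)

/-- Chebyshev's inequality for the information density `-log P^n(x)`, whose mean is `n H(P)`
and whose variance is `n V(P)`. -/
lemma sum_iid_le_V_div {P : α → ℝ} (hP : IsProb P) {δ : ℝ} (hδ : 0 < δ) {n : ℕ} (hn : 0 < n)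
    (D : Finset (Fin n → α))
    (hD : ∀ x ∈ D, 0 < iid P n x → n * δ ≤ |Real.log (iid P n x) + n * H P|) :
    ∑ x ∈ D, iid P n x ≤ V P / (n * δ ^ 2) := by
  set t : α → ℝ := fun a => -Real.log (P a) - H P
  have hdev {x} (hx : 0 < iid P n x) :
      Real.log (iid P n x) + n * H P = -∑ i, t (x i) := by
    simp only [t, log_iid hx, sum_sub_distrib, sum_neg_distrib, sum_const, card_univ,
      Fintype.card_fin, nsmul_eq_mul]
    ring
  have hnδ : (0 : ℝ) < n * δ := by positivity
  have hcheb : (n * δ) ^ 2 * ∑ x ∈ D, iid P n x ≤ ∑ x, iid P n x * (∑ i, t (x i)) ^ 2 := by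
    rw [mul_sum]
    refine (sum_le_sum fun x hx => ?_).trans (sum_le_sum_of_subset_of_nonneg (subset_univ D)
      fun x _ _ => mul_nonneg ((isProb_iid hP n).1 x) (sq_nonneg _))
    rcases ((isProb_iid hP n).1 x).eq_or_lt with hx0 | hx0
    · simp [← hx0]
    · have := hD x hx hx0
      rw [hdev hx0, abs_neg] at this
      rw [mul_comm (iid P n x)]
      exact mul_le_mul_of_nonneg_right
        (by simpa only [sq_abs] using pow_le_pow_left₀ hnδ.le this 2) hx0.le
  rw [sum_iid_mul_sum_sq hP (sum_mul_neg_log_sub_H hP)] at hcheb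
  change _ ≤ n * V P at hcheb
  rw [le_div_iff₀ (by positivity)]
  nlinarith

lemma sum_iid_filter_le_exp_le {P : α → ℝ} (hP : IsProb P) {δ : ℝ} (hδ : 0 < δ) {n : ℕ}
    (hn : 0 < n) :
    ∑ x with iid P n x ≤ Real.exp (-(n * (H P + δ))), iid P n x ≤ V P / (n * δ ^ 2) := by
  refine sum_iid_le_V_div hP hδ hn _ fun x hx hx0 => ?_
  have := Real.log_le_log hx0 (mem_filter.mp hx).2
  rw [Real.log_exp] at this
  exact le_abs.mpr (Or.inr (by linarith))

lemma sum_iid_filter_exp_le_le {P : α → ℝ} (hP : IsProb P) {δ : ℝ} (hδ : 0 < δ) {n : ℕ}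
    (hn : 0 < n) :
    ∑ x with Real.exp (-(n * (H P - δ))) ≤ iid P n x, iid P n x ≤ V P / (n * δ ^ 2) := by
  refine sum_iid_le_V_div hP hδ hn _ fun x hx _ => ?_
  have := Real.log_le_log (Real.exp_pos _) (mem_filter.mp hx).2
  rw [Real.log_exp] at this
  exact le_abs.mpr (Or.inl (by linarith))

end Product

section Fidelity

lemma le_sqrt_mul_of_le {m a b : ℝ} (ha : m ≤ a) (hb : m ≤ b) : m ≤ √(a * b) := by
  rcases le_or_gt m 0 with hm | hm
  · exact hm.trans (Real.sqrt_nonneg _)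
  · exact Real.le_sqrt_of_sq_le (by nlinarith)

lemma sum_sqrt_mul_le {ι : Type*} (s : Finset ι) {f g : ι → ℝ} (hf : ∀ i, 0 ≤ f i)
    (hg : ∀ i, 0 ≤ g i) : ∑ i ∈ s, √(f i * g i) ≤ √(∑ i ∈ s, f i) * √(∑ i ∈ s, g i) := by
  simpa only [Real.sqrt_mul (hf _)] using Real.sum_sqrt_mul_sqrt_le s hf hg

variable [Fintype β]

lemma fid_nonneg (R S : β → ℝ) : 0 ≤ fid R S :=
  sum_nonneg fun _ _ => Real.sqrt_nonneg _

lemma fid_le_one {R S : β → ℝ} (hR : IsProb R) (hS : IsProb S) : fid R S ≤ 1 := by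
  simpa [fid, hR.2, hS.2] using sum_sqrt_mul_le univ hR.1 hS.1

lemma fid_le_sqrt_add_sqrt [DecidableEq β] {R S : β → ℝ} (hR : IsProb R) (hS : IsProb S)
    (A : Finset β) : fid R S ≤ √(∑ y ∈ A, S y) + √(∑ y ∈ Aᶜ, R y) := by
  rw [fid, ← sum_add_sum_compl A]
  gcongr
  · calc ∑ y ∈ A, √(R y * S y) ≤ √(∑ y ∈ A, R y) * √(∑ y ∈ A, S y) :=
          sum_sqrt_mul_le A hR.1 hS.1
      _ ≤ √(∑ y ∈ A, S y) :=
          mul_le_of_le_one_left (Real.sqrt_nonneg _)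
            (Real.sqrt_le_one.mpr (sum_le_one_of_isProb hR A))
  · calc ∑ y ∈ Aᶜ, √(R y * S y) ≤ √(∑ y ∈ Aᶜ, R y) * √(∑ y ∈ Aᶜ, S y) :=
          sum_sqrt_mul_le Aᶜ hR.1 hS.1
      _ ≤ √(∑ y ∈ Aᶜ, R y) :=
          mul_le_of_le_one_right (Real.sqrt_nonneg _)
            (Real.sqrt_le_one.mpr (sum_le_one_of_isProb hS Aᶜ))

end Fidelity

section TopSum

variable [Fintype α]

lemma topSum_set_finite (P : α → ℝ) (l : ℕ) :
    {s : ℝ | ∃ A : Finset α, #A ≤ l ∧ s = ∑ x ∈ A, P x}.Finite :=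
  (Set.finite_range fun A : Finset α => ∑ x ∈ A, P x).subset fun _ ⟨A, _, hs⟩ => ⟨A, hs.symm⟩

lemma le_topSum (P : α → ℝ) {l : ℕ} {A : Finset α} (hA : #A ≤ l) :
    ∑ x ∈ A, P x ≤ topSum P l :=
  le_csSup (topSum_set_finite P l).bddAbove ⟨A, hA, rfl⟩

lemma exists_topSum_eq (P : α → ℝ) (l : ℕ) :
    ∃ A : Finset α, #A ≤ l ∧ topSum P l = ∑ x ∈ A, P x :=
  Set.Nonempty.csSup_mem (s := {s : ℝ | ∃ A : Finset α, #A ≤ l ∧ s = ∑ x ∈ A, P x})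
    ⟨0, ∅, by simp⟩ (topSum_set_finite P l)

end TopSum

section Push

variable [Fintype α]

lemma push_apply [DecidableEq β] (W : α → β) (P : α → ℝ) (y : β) :
    push W P y = ∑ x with W x = y, P x := by
  rw [sum_filter, push]
  congr!

lemma sum_filter_le_push [DecidableEq β] {P : α → ℝ} (hP : ∀ x, 0 ≤ P x) (W : α → β)
    (U : Finset α) (y : β) : ∑ x ∈ U with W x = y, P x ≤ push W P y :=
  push_apply W P y ▸ sum_le_sum_of_subset_of_nonneg (filter_subset_filter _ (subset_univ U))
    fun x _ _ => hP x

lemma isProb_push [Fintype β] {P : α → ℝ} (hP : IsProb P) (W : α → β) : IsProb (push W P) := by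
  classical
  refine ⟨fun y => ?_, ?_⟩
  · simpa using sum_filter_le_push hP.1 W ∅ y
  · rw [← hP.2, ← sum_fiberwise univ W P]
    exact sum_congr rfl fun y _ => push_apply W P y

lemma maj_push [Fintype β] {P : α → ℝ} (hP : ∀ x, 0 ≤ P x) (W : α → β) :
    Maj P (push W P) := by
  classical
  intro l
  refine csSup_le ⟨0, ∅, by simp⟩ ?_
  rintro _ ⟨A, hA, rfl⟩
  calc ∑ x ∈ A, P x = ∑ y ∈ A.image W, ∑ x ∈ A with W x = y, P x :=
        (sum_fiberwise_of_maps_to (fun x hx => mem_image_of_mem W hx) P).symm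
    _ ≤ ∑ y ∈ A.image W, push W P y := sum_le_sum fun y _ => sum_filter_le_push hP W A y
    _ ≤ topSum (push W P) l := le_topSum _ (card_image_le.trans hA)

end Push

section Packing

lemma exists_subset_sub_le_sum_le {p : α → ℝ} {τ : ℝ} (hτ : 0 ≤ τ) (U : Finset α)
    (hU : ∀ x ∈ U, p x ≤ τ) {t : ℝ} (ht : 0 ≤ t) (htU : t ≤ ∑ x ∈ U, p x) :
    ∃ A ⊆ U, t - τ ≤ ∑ x ∈ A, p x ∧ ∑ x ∈ A, p x ≤ t := by
  classical
  induction U using Finset.induction_on generalizing t with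
  | empty =>
    rw [sum_empty] at htU
    exact ⟨∅, empty_subset _, by rw [sum_empty]; linarith, by rw [sum_empty]; linarith⟩
  | @insert x U hx ih =>
    by_cases hsmall : t ≤ τ
    · exact ⟨∅, empty_subset _, by simpa using hsmall, by simpa using ht⟩
    have hpx := hU x (mem_insert_self x U)
    rw [sum_insert hx] at htU
    obtain ⟨A, hAU, hlow, hupp⟩ := ih (fun z hz => hU z (mem_insert_of_mem hz))
      (t := t - p x) (by linarith) (by linarith)
    have hxA : x ∉ A := fun h => hx (hAU h)
    exact ⟨insert x A, insert_subset_insert x hAU, by rw [sum_insert hxA]; linarith,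
      by rw [sum_insert hxA]; linarith⟩

lemma exists_map_sub_le_sum_fiber [DecidableEq β] [Nonempty β] {p : α → ℝ} (hp : ∀ x, 0 ≤ p x)
    {τ : ℝ} (hτ : 0 ≤ τ) (f : β → ℝ) (T : Finset β) (hf : ∀ y ∈ T, 0 ≤ f y) (U : Finset α)
    (hU : ∀ x ∈ U, p x ≤ τ) (hTU : ∑ y ∈ T, f y ≤ ∑ x ∈ U, p x) :
    ∃ W : α → β, ∀ y ∈ T, f y - τ ≤ ∑ x ∈ U with W x = y, p x := by
  classical
  induction T using Finset.induction_on generalizing U with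
  | empty => exact ⟨fun _ => Classical.arbitrary β, by simp⟩
  | @insert y T hy ih =>
    rw [sum_insert hy] at hTU
    have hfT : 0 ≤ ∑ z ∈ T, f z := sum_nonneg fun z hz => hf z (mem_insert_of_mem hz)
    obtain ⟨A, hAU, hAlow, hAupp⟩ := exists_subset_sub_le_sum_le hτ U hU
      (hf y (mem_insert_self y T)) (by linarith)
    obtain ⟨W, hW⟩ := ih (fun z hz => hf z (mem_insert_of_mem hz)) (U \ A)
      (fun x hx => hU x (mem_sdiff.mp hx).1) (by rw [sum_sdiff_eq_sub hAU]; linarith)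
    refine ⟨fun x => if x ∈ A then y else W x, fun z hz => ?_⟩
    rcases mem_insert.mp hz with rfl | hzT
    · refine hAlow.trans (sum_le_sum_of_subset_of_nonneg (fun x hx => ?_) fun x _ _ => hp x)
      simp [hAU hx, hx]
    · refine (hW z hzT).trans (sum_le_sum_of_subset_of_nonneg (fun x hx => ?_) fun x _ _ => hp x)
      obtain ⟨hxUA, hWx⟩ := mem_filter.mp hx
      obtain ⟨hxU, hxA⟩ := mem_sdiff.mp hxUA
      exact mem_filter.mpr ⟨hxU, by simp only [if_neg hxA, hWx]⟩

end Packing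

section Transformations

variable [Fintype α] [Fintype β]

lemma le_FD (P : α → ℝ) (Q : β → ℝ) (W : α → β) : fid (push W P) Q ≤ FD P Q :=
  le_csSup ((Set.finite_range fun W : α → β => fid (push W P) Q).subset
    fun _ hr => Set.mem_range.mpr (hr.imp fun _ => Eq.symm)).bddAbove ⟨W, rfl⟩

lemma FD_nonneg [Nonempty β] (P : α → ℝ) (Q : β → ℝ) : 0 ≤ FD P Q :=
  (fid_nonneg _ _).trans (le_FD P Q fun _ => Classical.arbitrary β)

lemma FM_le_of_forall [Nonempty β] {P : α → ℝ} (hP : IsProb P) (Q : β → ℝ) {b : ℝ}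
    (h : ∀ P' : β → ℝ, IsProb P' → Maj P P' → fid P' Q ≤ b) : FM P Q ≤ b := by
  let W : α → β := fun _ => Classical.arbitrary β
  refine csSup_le ?_ ?_
  · exact ⟨_, push W P, isProb_push hP W, maj_push hP.1 W, rfl⟩
  · rintro _ ⟨P', hP', hPP', rfl⟩
    exact h P' hP' hPP'

lemma FM_le_one [Nonempty β] {P : α → ℝ} {Q : β → ℝ} (hP : IsProb P) (hQ : IsProb Q) :
    FM P Q ≤ 1 :=
  FM_le_of_forall hP Q fun _ hP' _ => fid_le_one hP' hQ

lemma FD_le_FM [Nonempty β] {P : α → ℝ} {Q : β → ℝ} (hP : IsProb P) (hQ : IsProb Q) :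
    FD P Q ≤ FM P Q := by
  refine csSup_le ⟨_, fun _ => Classical.arbitrary β, rfl⟩ ?_
  rintro _ ⟨W, rfl⟩
  exact le_csSup ⟨1, by rintro _ ⟨P', hP', -, rfl⟩; exact fid_le_one hP' hQ⟩
    ⟨push W P, isProb_push hP W, maj_push hP.1 W, rfl⟩

end Transformations

section OneShot

variable [Fintype α] [Fintype β] [Nonempty β] {P : α → ℝ} {Q : β → ℝ}

lemma sum_mul_sum_sub_card_mul_le_FD (hP : IsProb P) (hQ : IsProb Q) {τ : ℝ} (hτ : 0 ≤ τ)
    {U : Finset α} (hU : ∀ x ∈ U, P x ≤ τ) (T : Finset β) :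
    (∑ x ∈ U, P x) * (∑ y ∈ T, Q y) - #T * τ ≤ FD P Q := by
  classical
  set c := ∑ x ∈ U, P x
  have hc0 : 0 ≤ c := sum_nonneg fun x _ => hP.1 x
  have hc1 : c ≤ 1 := sum_le_one_of_isProb hP U
  obtain ⟨W, hW⟩ := exists_map_sub_le_sum_fiber hP.1 hτ (fun y => c * Q y) T
    (fun y _ => mul_nonneg hc0 (hQ.1 y)) U hU
    (by rw [← mul_sum]; exact mul_le_of_le_one_right hc0 (sum_le_one_of_isProb hQ T))
  calc c * (∑ y ∈ T, Q y) - #T * τ = ∑ y ∈ T, (c * Q y - τ) := by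
        rw [sum_sub_distrib, mul_sum, sum_const, nsmul_eq_mul]
    _ ≤ ∑ y ∈ T, √(push W P y * Q y) := sum_le_sum fun y hy =>
        le_sqrt_mul_of_le ((hW y hy).trans (sum_filter_le_push hP.1 W U y))
          (by nlinarith [hQ.1 y])
    _ ≤ fid (push W P) Q :=
        sum_le_sum_of_subset_of_nonneg (subset_univ T) fun _ _ _ => Real.sqrt_nonneg _
    _ ≤ FD P Q := le_FD P Q W

/-- Every `P'` majorizing `P` puts mass `≥ 1 - ε` on some `K` points, where `Q` has
mass `≤ η`. -/
lemma FM_le_sqrt_add_sqrt (hP : IsProb P) (hQ : IsProb Q) {K : ℕ} {ε η : ℝ}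
    (hK : 1 - ε ≤ topSum P K) (hη : ∀ A : Finset β, #A ≤ K → ∑ y ∈ A, Q y ≤ η) :
    FM P Q ≤ √η + √ε := by
  classical
  refine FM_le_of_forall hP Q fun P' hP' hPP' => ?_
  obtain ⟨A, hA, hAeq⟩ := exists_topSum_eq P' K
  have hAc : ∑ y ∈ Aᶜ, P' y ≤ ε := by
    have := sum_add_sum_compl A P'
    linarith [hPP' K, hP'.2]
  exact (fid_le_sqrt_add_sqrt hP' hQ A).trans
    (add_le_add (Real.sqrt_le_sqrt (hη A hA)) (Real.sqrt_le_sqrt hAc))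

end OneShot

lemma tendsto_div_natCast_mul_sq (C : ℝ) {δ : ℝ} (hδ : δ ≠ 0) {u : ℕ → ℕ}
    (hu : Tendsto u atTop atTop) : Tendsto (fun n => C / (u n * δ ^ 2)) atTop (nhds 0) :=
  ((tendsto_natCast_atTop_atTop.comp hu).atTop_mul_const (by positivity)).const_div_atTop C

lemma tendsto_exp_of_le_sub_mul {f : ℕ → ℝ} {C ρ : ℝ} (hρ : 0 < ρ)
    (hf : ∀ n, f n ≤ C - ρ * n) : Tendsto (fun n => Real.exp (f n)) atTop (nhds 0) :=
  Real.tendsto_exp_atBot.comp <| tendsto_atBot_mono hf <| tendsto_atBot_add_const_left _ C <|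
    tendsto_neg_atTop_atBot.comp (tendsto_natCast_atTop_atTop.const_mul_atTop hρ)

section Asymptotic

variable [Fintype α] [Fintype β] {P : α → ℝ} {Q : β → ℝ}

lemma one_sub_sub_sub_exp_le_FD_iid (hP : IsProb P) (hQ : IsProb Q) {δ : ℝ} (hδ : 0 < δ)
    {n L : ℕ} (hn : 0 < n) (hL : 0 < L) :
    1 - V P / (n * δ ^ 2) - V Q / (L * δ ^ 2) - Real.exp (L * (H Q + δ) - n * (H P - δ))
      ≤ FD (iid P n) (iid Q L) := by
  classical
  have := nonempty_of_isProb hQ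
  set τP := Real.exp (-(n * (H P - δ)))
  set τQ := Real.exp (-(L * (H Q + δ)))
  set U : Finset (Fin n → α) := {x | iid P n x < τP}
  set T : Finset (Fin L → β) := {y | τQ < iid Q L y}
  have hU : 1 - V P / (n * δ ^ 2) ≤ ∑ x ∈ U, iid P n x :=
    one_sub_le_sum_filter (isProb_iid hP n) (by
      simpa only [not_lt] using sum_iid_filter_exp_le_le hP hδ hn)
  have hT : 1 - V Q / (L * δ ^ 2) ≤ ∑ y ∈ T, iid Q L y :=
    one_sub_le_sum_filter (isProb_iid hQ L) (by
      simpa only [not_lt] using sum_iid_filter_le_exp_le hQ hδ hL)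
  have hcard : #T * τP ≤ Real.exp (L * (H Q + δ) - n * (H P - δ)) := by
    have hτ : τP = τQ * Real.exp (L * (H Q + δ) - n * (H P - δ)) := by
      simp only [τP, τQ, ← Real.exp_add]
      ring_nf
    rw [hτ, ← mul_assoc]
    exact mul_le_of_le_one_left (Real.exp_pos _).le
      (card_filter_lt_mul_le_one (isProb_iid hQ L) τQ)
  have hmain := sum_mul_sum_sub_card_mul_le_FD (isProb_iid hP n) (isProb_iid hQ L)
    (Real.exp_pos _).le (U := U) (fun x hx => (mem_filter.mp hx).2.le) T
  nlinarith [mul_nonneg (sub_nonneg.mpr (sum_le_one_of_isProb (isProb_iid hP n) U))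
    (sub_nonneg.mpr (sum_le_one_of_isProb (isProb_iid hQ L) T))]

lemma FM_iid_le (hP : IsProb P) (hQ : IsProb Q) {δ : ℝ} (hδ : 0 < δ) {n L : ℕ} (hn : 0 < n)
    (hL : 0 < L) :
    FM (iid P n) (iid Q L) ≤ √(V Q / (L * δ ^ 2) + Real.exp (n * (H P + δ) - L * (H Q - δ)))
      + √(V P / (n * δ ^ 2)) := by
  classical
  have := nonempty_of_isProb hQ
  set τP := Real.exp (-(n * (H P + δ)))
  set τQ := Real.exp (-(L * (H Q - δ)))
  set K := #{x | τP < iid P n x}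
  refine FM_le_sqrt_add_sqrt (isProb_iid hP n) (isProb_iid hQ L) (K := K) ?_ fun A hA => ?_
  · exact (one_sub_le_sum_filter (isProb_iid hP n) (by
      simpa only [not_lt] using sum_iid_filter_le_exp_le hP hδ hn)).trans (le_topSum _ le_rfl)
  · have hK : K * τQ ≤ Real.exp (n * (H P + δ) - L * (H Q - δ)) := by
      have hτ : τQ = τP * Real.exp (n * (H P + δ) - L * (H Q - δ)) := by
        simp only [τP, τQ, ← Real.exp_add]
        ring_nf
      rw [hτ, ← mul_assoc]
      exact mul_le_of_le_one_left (Real.exp_pos _).le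
        (card_filter_lt_mul_le_one (isProb_iid hP n) τP)
    calc ∑ y ∈ A, iid Q L y ≤ ∑ y with τQ ≤ iid Q L y, iid Q L y + K * τQ :=
          sum_le_sum_filter_add_card_mul (isProb_iid hQ L).1 τQ hA (Real.exp_pos _).le
      _ ≤ _ := add_le_add (sum_iid_filter_exp_le_le hQ hδ hL) hK

theorem tendsto_FD_iid_one (hP : IsProb P) (hQ : IsProb Q) {a : ℝ} {L : ℕ → ℕ}
    (hL : Tendsto L atTop atTop) (hLa : ∀ n, (L n : ℝ) ≤ a * n) (hgap : a * H Q < H P) :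
    Tendsto (fun n => FD (iid P n) (iid Q (L n))) atTop (nhds 1) := by
  have := nonempty_of_isProb hQ
  obtain ⟨δ, hδ, hδgap⟩ := exists_pos_mul_lt (sub_pos.mpr hgap) (1 + a)
  have hexp : Tendsto (fun n => Real.exp (L n * (H Q + δ) - n * (H P - δ))) atTop (nhds 0) :=
    tendsto_exp_of_le_sub_mul (C := 0) (ρ := H P - a * H Q - (1 + a) * δ) (by linarith)
      fun n => by
        nlinarith [mul_le_mul_of_nonneg_right (hLa n) (by linarith [H_nonneg hQ] : 0 ≤ H Q + δ)]
  have hlow := ((tendsto_const_nhds (x := (1 : ℝ))).sub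
    (tendsto_div_natCast_mul_sq (V P) hδ.ne' (u := fun n => n) tendsto_id)).sub
    (tendsto_div_natCast_mul_sq (V Q) hδ.ne' hL) |>.sub hexp
  rw [sub_zero, sub_zero, sub_zero] at hlow
  refine tendsto_of_tendsto_of_tendsto_of_le_of_le' hlow tendsto_const_nhds ?_ ?_
  · filter_upwards [eventually_gt_atTop 0, hL.eventually_gt_atTop 0] with n hn hLn
    exact one_sub_sub_sub_exp_le_FD_iid hP hQ hδ hn hLn
  · exact .of_forall fun n =>
      (FD_le_FM (isProb_iid hP n) (isProb_iid hQ _)).trans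
        (FM_le_one (isProb_iid hP n) (isProb_iid hQ _))

theorem tendsto_FM_iid_zero (hP : IsProb P) (hQ : IsProb Q) {a : ℝ} {L : ℕ → ℕ}
    (hL : Tendsto L atTop atTop) (hLa : ∀ n, a * n - 1 ≤ L n) (hgap : H P < a * H Q) :
    Tendsto (fun n => FM (iid P n) (iid Q (L n))) atTop (nhds 0) := by
  have := nonempty_of_isProb hQ
  obtain ⟨δ, hδ, hδgap⟩ := exists_pos_mul_lt (sub_pos.mpr hgap) (1 + a)
  have hδQ : δ ≤ H Q := by nlinarith [H_nonneg hP, H_nonneg hQ]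
  have hexp : Tendsto (fun n => Real.exp (n * (H P + δ) - L n * (H Q - δ))) atTop (nhds 0) :=
    tendsto_exp_of_le_sub_mul (C := H Q - δ) (ρ := a * H Q - H P - (1 + a) * δ) (by linarith)
      fun n => by nlinarith [mul_le_mul_of_nonneg_right (hLa n) (sub_nonneg.mpr hδQ)]
  have hupp := (((tendsto_div_natCast_mul_sq (V Q) hδ.ne' hL).add hexp).sqrt).add
    (tendsto_div_natCast_mul_sq (V P) hδ.ne' (u := fun n => n) tendsto_id).sqrt
  rw [add_zero, Real.sqrt_zero, add_zero] at hupp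
  refine tendsto_of_tendsto_of_tendsto_of_le_of_le' tendsto_const_nhds hupp ?_ ?_
  · exact .of_forall fun n =>
      (FD_nonneg _ _).trans (FD_le_FM (isProb_iid hP n) (isProb_iid hQ _))
  · filter_upwards [eventually_gt_atTop 0, hL.eventually_gt_atTop 0] with n hn hLn
    exact FM_iid_le hP hQ hδ hn hLn

end Asymptotic

/-- first order asymptotics of random number generation. -/
theorem first_order {X Y : Type*} [Fintype X] [Fintype Y]
    (P : X → ℝ) (Q : Y → ℝ) (hP : IsProb P) (hQ : IsProb Q)
    (hHQ : 0 < H Q) (a : ℝ) (ha : 0 < a) :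
    (a < H P / H Q →
      Tendsto (fun n : ℕ => FD (iid P n) (iid Q ⌊a * n⌋₊)) atTop (nhds 1) ∧
      Tendsto (fun n : ℕ => FM (iid P n) (iid Q ⌊a * n⌋₊)) atTop (nhds 1)) ∧
    (a > H P / H Q →
      Tendsto (fun n : ℕ => FD (iid P n) (iid Q ⌊a * n⌋₊)) atTop (nhds 0) ∧
      Tendsto (fun n : ℕ => FM (iid P n) (iid Q ⌊a * n⌋₊)) atTop (nhds 0)) := by
  have := nonempty_of_isProb hQ
  have hL : Tendsto (fun n : ℕ => ⌊a * n⌋₊) atTop atTop :=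
    tendsto_nat_floor_atTop.comp (tendsto_natCast_atTop_atTop.const_mul_atTop ha)
  have hFD_le_FM (n : ℕ) : FD (iid P n) (iid Q ⌊a * n⌋₊) ≤ FM (iid P n) (iid Q ⌊a * n⌋₊) :=
    FD_le_FM (isProb_iid hP n) (isProb_iid hQ ⌊a * n⌋₊)
  refine ⟨fun hlt => ?_, fun hgt => ?_⟩
  · have hFD := tendsto_FD_iid_one hP hQ hL (fun n => Nat.floor_le (by positivity))
      ((lt_div_iff₀ hHQ).mp hlt)
    exact ⟨hFD, tendsto_of_tendsto_of_tendsto_of_le_of_le hFD tendsto_const_nhds hFD_le_FM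
      fun n => FM_le_one (isProb_iid hP n) (isProb_iid hQ _)⟩
  · have hFM := tendsto_FM_iid_zero hP hQ hL (fun n => by linarith [Nat.lt_floor_add_one (a * n)])
      ((div_lt_iff₀ hHQ).mp hgt)
    exact ⟨squeeze_zero (fun n => FD_nonneg _ _) hFD_le_FM hFM, hFM⟩

end RNG
end

section
/- Let P and Q be probability distributions on finite sets, neither of which is a uniform distribution (so V(P) > 0 and V(Q) > 0), and suppose H(P)/V(P) > H(Q)/V(Q). Then for every b ∈ ℝ the equation N_P(x)/N_{P,Q,b}(x) = G_P(x)/G_{P,Q,b}(x) has a unique real solution x = α. -/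
open MeasureTheory Filter

namespace RNG

variable {α β : Type*}

/-!
Both sides of the equation are positive, so it says that the ratios cdf/density of the two
normal laws agree. For `N(m, v)` this ratio is `√v · R(z)` with `z = (x - m)/√v` and
`R = G / N(0,1)`; since the standard density satisfies `φ' = -zφ`, its derivative in `x` is
`1 + z R(z)`, and `z R(z)` is strictly increasing because `(1 + z²) G(z) + z φ(z) > 0`
(an increasing function vanishing at `-∞`). Hence the difference of the two ratios decreases
while `z₁ < z₂` and increases afterwards; as `V(P) < H(P) V(Q) / H(Q)`, which is the
hypothesis on `H / V`, the two standardizations cross exactly once. The difference tends to `0`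
at `-∞`, so it is negative on the decreasing branch, and it is positive for large `x` since the
factor `exp((z₁² - z₂²)/2)` blows up. It therefore has exactly one zero.
-/

open Set Topology Real

lemma normalPDF_pos (m : ℝ) {v : ℝ} (hv : 0 < v) (t : ℝ) : 0 < normalPDF m v t := by
  unfold normalPDF; positivity

lemma normalPDF_zero_one_eq_gaussianPDFReal :
    normalPDF 0 1 = ProbabilityTheory.gaussianPDFReal 0 1 := by
  ext t; simp [normalPDF, ProbabilityTheory.gaussianPDFReal]

lemma integrable_normalPDF_zero_one : Integrable (normalPDF 0 1) :=
  normalPDF_zero_one_eq_gaussianPDFReal ▸ ProbabilityTheory.integrable_gaussianPDFReal 0 1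

lemma hasDerivAt_normalPDF_zero_one (z : ℝ) :
    HasDerivAt (normalPDF 0 1) (-z * normalPDF 0 1 z) z := by
  have hfun : normalPDF 0 1 = fun t => (√(2 * π))⁻¹ * exp (-t ^ 2 / 2) := by
    ext t
    simp [normalPDF]
  rw [hfun]
  refine (((hasDerivAt_pow 2 z).fun_neg.div_const 2).exp.const_mul _).congr_deriv ?_
  push_cast
  ring

lemma stdG_pos (x : ℝ) : 0 < stdG x := by
  rw [stdG, setIntegral_pos_iff_support_of_nonneg_ae
    (ae_of_all _ fun t => (normalPDF_pos 0 one_pos t).le)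
    integrable_normalPDF_zero_one.integrableOn,
    Function.support_eq_univ fun t => (normalPDF_pos 0 one_pos t).ne', univ_inter]
  simp

lemma stdG_le_one (x : ℝ) : stdG x ≤ 1 := by
  have h := ProbabilityTheory.integral_gaussianPDFReal_eq_one 0 one_ne_zero
  rw [← normalPDF_zero_one_eq_gaussianPDFReal] at h
  exact h ▸ setIntegral_le_integral integrable_normalPDF_zero_one
    (ae_of_all _ fun t => (normalPDF_pos 0 one_pos t).le)

lemma stdG_mono : Monotone stdG := fun _ _ hab =>
  setIntegral_mono_set integrable_normalPDF_zero_one.integrableOn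
    (ae_of_all _ fun t => (normalPDF_pos 0 one_pos t).le) (Iic_subset_Iic.2 hab).eventuallyLE

lemma hasDerivAt_stdG (x : ℝ) : HasDerivAt stdG (normalPDF 0 1 x) x := by
  have hcont : Continuous (normalPDF 0 1) := by unfold normalPDF; fun_prop
  have hstdG : ∀ y, stdG y = stdG 0 + ∫ t in (0 : ℝ)..y, normalPDF 0 1 t := fun y => by
    rw [← intervalIntegral.integral_Iic_sub_Iic integrable_normalPDF_zero_one.integrableOn
      integrable_normalPDF_zero_one.integrableOn, stdG, stdG]
    ring
  refine (HasDerivAt.const_add _ ?_).congr_of_eventuallyEq (Eventually.of_forall hstdG)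
  exact intervalIntegral.integral_hasDerivAt_right
    integrable_normalPDF_zero_one.intervalIntegrable
    hcont.aestronglyMeasurable.stronglyMeasurableAtFilter hcont.continuousAt

lemma normalPDF_zero_one_le_exp {t : ℝ} (ht : t ≤ -2) : normalPDF 0 1 t ≤ exp t := by
  have hpi : 1 ≤ √(2 * π * 1) := one_le_sqrt.2 (by nlinarith [pi_gt_three])
  calc normalPDF 0 1 t ≤ 1 * exp t := by
        unfold normalPDF
        gcongr
        · exact inv_le_one_of_one_le₀ hpi
        · nlinarith
    _ = exp t := one_mul _

lemma stdG_le_exp {x : ℝ} (hx : x ≤ -2) : stdG x ≤ exp x := by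
  rw [stdG, ← integral_exp_Iic x]
  exact setIntegral_mono_on integrable_normalPDF_zero_one.integrableOn (integrableOn_exp_Iic x)
    measurableSet_Iic fun t ht => normalPDF_zero_one_le_exp (le_trans ht hx)

lemma tendsto_pow_mul_atBot_of_le_exp {f : ℝ → ℝ} (hf0 : ∀ z, 0 ≤ f z)
    (hf : ∀ z ≤ -2, f z ≤ exp z) (n : ℕ) : Tendsto (fun z => z ^ n * f z) atBot (𝓝 0) := by
  have hexp : Tendsto (fun z : ℝ => (-z) ^ n * exp z) atBot (𝓝 0) := by
    refine ((tendsto_pow_mul_exp_neg_atTop_nhds_zero n).comp tendsto_neg_atBot_atTop).congr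
      fun z => ?_
    simp
  refine squeeze_zero_norm' ?_ hexp
  filter_upwards [eventually_le_atBot (-2 : ℝ)] with z hz
  rw [norm_mul, norm_pow, Real.norm_eq_abs, abs_of_neg (by linarith), Real.norm_of_nonneg (hf0 z)]
  exact mul_le_mul_of_nonneg_left (hf z hz) (pow_nonneg (by linarith) n)

lemma pos_of_strictMono_of_tendsto_atBot {f : ℝ → ℝ} (hf : StrictMono f)
    (h : Tendsto f atBot (𝓝 0)) (x : ℝ) : 0 < f x :=
  (hf.monotone.le_of_tendsto h (x - 1)).trans_lt (hf (sub_one_lt x))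

lemma normalPDF_add_mul_stdG_pos (z : ℝ) : 0 < normalPDF 0 1 z + z * stdG z := by
  have hderiv (y : ℝ) : HasDerivAt (fun z => normalPDF 0 1 z + z * stdG z) (stdG y) y := by
    refine ((hasDerivAt_normalPDF_zero_one y).add
      ((hasDerivAt_id y).mul (hasDerivAt_stdG y))).congr_deriv ?_
    simp only [id]; ring
  refine pos_of_strictMono_of_tendsto_atBot
    (strictMono_of_hasDerivAt_pos hderiv stdG_pos) ?_ z
  have hpdf := tendsto_pow_mul_atBot_of_le_exp (fun z => (normalPDF_pos 0 one_pos z).le)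
    (fun _ => normalPDF_zero_one_le_exp) 0
  have hcdf := tendsto_pow_mul_atBot_of_le_exp (fun z => (stdG_pos z).le) (fun _ => stdG_le_exp) 1
  simpa using hpdf.add hcdf

lemma one_add_sq_mul_stdG_add_mul_normalPDF_pos (z : ℝ) :
    0 < (1 + z ^ 2) * stdG z + z * normalPDF 0 1 z := by
  have hderiv (y : ℝ) : HasDerivAt (fun z => (1 + z ^ 2) * stdG z + z * normalPDF 0 1 z)
      (2 * (normalPDF 0 1 y + y * stdG y)) y := by
    refine ((((hasDerivAt_pow 2 y).const_add 1).mul (hasDerivAt_stdG y)).add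
      ((hasDerivAt_id y).mul (hasDerivAt_normalPDF_zero_one y))).congr_deriv ?_
    simp only [id]; ring
  refine pos_of_strictMono_of_tendsto_atBot (strictMono_of_hasDerivAt_pos hderiv
    fun y => mul_pos two_pos (normalPDF_add_mul_stdG_pos y)) ?_ z
  have hcdf := tendsto_pow_mul_atBot_of_le_exp (fun z => (stdG_pos z).le) (fun _ => stdG_le_exp)
  have hpdf := tendsto_pow_mul_atBot_of_le_exp (fun z => (normalPDF_pos 0 one_pos z).le)
    (fun _ => normalPDF_zero_one_le_exp) 1
  simpa [add_mul] using ((hcdf 0).add (hcdf 2)).add hpdf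

/-- The Mills ratio of the standard normal law, taken at `-z`. -/
noncomputable def millsRatio (z : ℝ) : ℝ := stdG z / normalPDF 0 1 z

lemma millsRatio_pos (z : ℝ) : 0 < millsRatio z :=
  div_pos (stdG_pos z) (normalPDF_pos 0 one_pos z)

lemma millsRatio_eq (z : ℝ) : millsRatio z = √(2 * π) * stdG z * exp (z ^ 2 / 2) := by
  rw [millsRatio, normalPDF, div_eq_mul_inv, mul_inv, inv_inv, ← exp_neg]
  ring_nf

lemma hasDerivAt_millsRatio (z : ℝ) : HasDerivAt millsRatio (1 + z * millsRatio z) z := by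
  have hφ := (normalPDF_pos 0 one_pos z).ne'
  refine ((hasDerivAt_stdG z).div (hasDerivAt_normalPDF_zero_one z) hφ).congr_deriv ?_
  rw [millsRatio]
  field_simp
  ring

lemma strictMono_mul_millsRatio : StrictMono fun z => z * millsRatio z := by
  refine strictMono_of_hasDerivAt_pos
    (fun z => ((hasDerivAt_id z).mul (hasDerivAt_millsRatio z))) fun z => ?_
  have hB := one_add_sq_mul_stdG_add_mul_normalPDF_pos z
  have hφ := normalPDF_pos 0 one_pos z
  have hderiv : 1 * millsRatio z + id z * (1 + z * millsRatio z)
      = ((1 + z ^ 2) * stdG z + z * normalPDF 0 1 z) / normalPDF 0 1 z := by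
    rw [millsRatio, id]
    field_simp
    ring
  rw [hderiv]
  positivity

lemma tendsto_millsRatio_atBot : Tendsto millsRatio atBot (𝓝 0) := by
  refine squeeze_zero' (Eventually.of_forall fun z => (millsRatio_pos z).le) ?_
    (tendsto_inv_atTop_zero.comp tendsto_neg_atBot_atTop)
  filter_upwards [eventually_lt_atBot 0] with z hz
  have hA := normalPDF_add_mul_stdG_pos z
  rw [Function.comp_apply, millsRatio, div_le_iff₀ (normalPDF_pos 0 one_pos z), inv_mul_eq_div,
    le_div_iff₀ (neg_pos.2 hz)]
  linarith

lemma existsUnique_eq_zero_of_tendsto_atBot {F : ℝ → ℝ} {ξ : ℝ} (hF : Continuous F)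
    (hbot : Tendsto F atBot (𝓝 0)) (hanti : StrictAntiOn F (Iic ξ))
    (hmono : StrictMonoOn F (Ici ξ)) (hpos : ∃ x, 0 < F x) : ∃! x, F x = 0 := by
  have hneg : ∀ x ≤ ξ, F x < 0 := fun x hx => by
    have hle : F (x - 1) ≤ 0 := ge_of_tendsto hbot <| by
      filter_upwards [eventually_le_atBot (x - 1)] with y hy
      exact hanti.antitoneOn (mem_Iic.2 (by linarith)) (mem_Iic.2 (by linarith)) hy
    exact (hanti (mem_Iic.2 (by linarith)) hx (sub_one_lt x)).trans_le hle
  obtain ⟨x₁, hx₁⟩ := hpos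
  have hξx₁ : ξ < x₁ := not_le.1 fun h => (hneg x₁ h).not_gt hx₁
  obtain ⟨x₀, hx₀, hFx₀⟩ := intermediate_value_Icc hξx₁.le hF.continuousOn
    ⟨(hneg ξ le_rfl).le, hx₁.le⟩
  have hroot : ∀ y, F y = 0 → ξ ≤ y := fun y hy => not_lt.1 fun h => (hneg y h.le).ne hy
  exact ⟨x₀, hFx₀, fun y hy => hmono.injOn (hroot y hy) (hroot x₀ hFx₀) (hy.trans hFx₀.symm)⟩

noncomputable def normalMills (m v x : ℝ) : ℝ := √v * millsRatio ((x - m) / √v)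

lemma stdG_div_normalPDF (m : ℝ) {v : ℝ} (hv : 0 < v) (x : ℝ) :
    stdG ((x - m) / √v) / normalPDF m v x = normalMills m v x := by
  have hs : 0 < √v := sqrt_pos.2 hv
  have hpdf : normalPDF m v x = normalPDF 0 1 ((x - m) / √v) / √v := by
    simp only [normalPDF, sub_zero, mul_one, div_pow, sq_sqrt hv.le,
      sqrt_mul (by positivity : 0 ≤ 2 * π) v]
    field_simp
  rw [normalMills, millsRatio, hpdf]
  field_simp

lemma hasDerivAt_normalMills (m : ℝ) {v : ℝ} (hv : 0 < v) (x : ℝ) :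
    HasDerivAt (normalMills m v) (1 + (x - m) / √v * millsRatio ((x - m) / √v)) x := by
  have hs : 0 < √v := sqrt_pos.2 hv
  have hz : HasDerivAt (fun x => (x - m) / √v) (1 / √v) x :=
    ((hasDerivAt_id x).sub_const m).div_const √v
  refine ((hasDerivAt_millsRatio _).comp x hz).const_mul √v |>.congr_deriv ?_
  field_simp

lemma tendsto_normalMills_atBot (m : ℝ) {v : ℝ} (hv : 0 < v) :
    Tendsto (normalMills m v) atBot (𝓝 0) := by
  have hz : Tendsto (fun x => (x - m) / √v) atBot atBot :=
    (tendsto_atBot_add_const_right _ (-m) tendsto_id).atBot_div_const (sqrt_pos.2 hv)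
  have h := (tendsto_millsRatio_atBot.comp hz).const_mul √v
  rwa [mul_zero] at h

lemma eventually_normalMills_lt {v₁ v₂ : ℝ} (hv₁ : 0 < v₁) (hv : v₁ < v₂) (m₁ m₂ : ℝ) :
    ∀ᶠ x in atTop, normalMills m₂ v₂ x < normalMills m₁ v₁ x := by
  have hs₁ : 0 < √v₁ := sqrt_pos.2 hv₁
  have hs : √v₁ < √v₂ := sqrt_lt_sqrt hv₁.le hv
  have hs₂ : 0 < √v₂ := hs₁.trans hs
  have hsq : Tendsto (fun x => ((x - m₁) / √v₁) ^ 2 - ((x - m₂) / √v₂) ^ 2) atTop atTop := by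
    have hlin (a c : ℝ) (ha : 0 < a) : Tendsto (fun x => a * x + c) atTop atTop :=
      tendsto_atTop_add_const_right _ c (tendsto_id.const_mul_atTop ha)
    have hd : 0 < 1 / √v₁ - 1 / √v₂ := sub_pos.2 (one_div_lt_one_div_of_lt hs₁ hs)
    refine ((hlin _ (m₂ / √v₂ - m₁ / √v₁) hd).atTop_mul_atTop₀
      (hlin (1 / √v₁ + 1 / √v₂) (-(m₁ / √v₁ + m₂ / √v₂)) (by positivity))).congr fun x => ?_
    ring
  have hexp := (tendsto_exp_atTop.comp (hsq.atTop_div_const two_pos)).eventually_gt_atTop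
    (√v₂ / (√v₁ * stdG 0))
  filter_upwards [hexp, eventually_ge_atTop m₁] with x hx hm
  set z₁ := (x - m₁) / √v₁
  set z₂ := (x - m₂) / √v₂
  have hG₀ := stdG_pos 0
  have hkey : √v₂ * exp (z₂ ^ 2 / 2) < √v₁ * stdG 0 * exp (z₁ ^ 2 / 2) := by
    rw [Function.comp_apply, div_lt_iff₀ (by positivity)] at hx
    calc √v₂ * exp (z₂ ^ 2 / 2)
        < exp ((z₁ ^ 2 - z₂ ^ 2) / 2) * (√v₁ * stdG 0) * exp (z₂ ^ 2 / 2) := by gcongr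
      _ = √v₁ * stdG 0 * exp (z₁ ^ 2 / 2) := by
          rw [mul_right_comm, ← exp_add]
          ring_nf
  have hz₁ : 0 ≤ z₁ := div_nonneg (sub_nonneg.2 hm) hs₁.le
  simp only [normalMills, millsRatio_eq]
  calc √v₂ * (√(2 * π) * stdG z₂ * exp (z₂ ^ 2 / 2))
        ≤ √(2 * π) * (√v₂ * exp (z₂ ^ 2 / 2)) := by
        have := mul_le_mul_of_nonneg_left (stdG_le_one z₂)
          (by positivity : 0 ≤ √(2 * π) * (√v₂ * exp (z₂ ^ 2 / 2)))
        linarith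
    _ < √(2 * π) * (√v₁ * stdG 0 * exp (z₁ ^ 2 / 2)) := by gcongr
    _ ≤ √v₁ * (√(2 * π) * stdG z₁ * exp (z₁ ^ 2 / 2)) := by
        have := mul_le_mul_of_nonneg_left (stdG_mono hz₁)
          (by positivity : 0 ≤ √(2 * π) * (√v₁ * exp (z₁ ^ 2 / 2)))
        linarith

theorem existsUnique_normalMills_eq {v₁ v₂ : ℝ} (hv₁ : 0 < v₁) (hv : v₁ < v₂) (m₁ m₂ : ℝ) :
    ∃! x, normalMills m₁ v₁ x = normalMills m₂ v₂ x := by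
  have hv₂ : 0 < v₂ := hv₁.trans hv
  have hs₁ : 0 < √v₁ := sqrt_pos.2 hv₁
  have hs : √v₁ < √v₂ := sqrt_lt_sqrt hv₁.le hv
  set z₁ := fun x => (x - m₁) / √v₁
  set z₂ := fun x => (x - m₂) / √v₂
  set F := fun x => normalMills m₁ v₁ x - normalMills m₂ v₂ x
  have hF (x : ℝ) : HasDerivAt F (z₁ x * millsRatio (z₁ x) - z₂ x * millsRatio (z₂ x)) x :=
    ((hasDerivAt_normalMills m₁ hv₁ x).sub (hasDerivAt_normalMills m₂ hv₂ x)).congr_deriv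
      (by ring)
  have hcont : Continuous F := continuous_iff_continuousAt.2 fun x => (hF x).continuousAt
  set ξ := (m₁ * √v₂ - m₂ * √v₁) / (√v₂ - √v₁)
  have hz (x : ℝ) : z₁ x - z₂ x = (√v₂ - √v₁) / (√v₁ * √v₂) * (x - ξ) := by
    simp only [z₁, z₂, ξ]
    field_simp [(sub_pos.2 hs).ne']
    ring
  have hc : 0 < (√v₂ - √v₁) / (√v₁ * √v₂) := div_pos (sub_pos.2 hs) (by positivity)
  have hmono : StrictMonoOn F (Ici ξ) := by
    refine strictMonoOn_of_hasDerivWithinAt_pos (convex_Ici ξ) hcont.continuousOn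
      (fun x _ => (hF x).hasDerivWithinAt) fun x hx => sub_pos.2 (strictMono_mul_millsRatio ?_)
    rw [interior_Ici] at hx
    exact sub_pos.1 (hz x ▸ mul_pos hc (sub_pos.2 hx))
  have hanti : StrictAntiOn F (Iic ξ) := by
    refine strictAntiOn_of_hasDerivWithinAt_neg (convex_Iic ξ) hcont.continuousOn
      (fun x _ => (hF x).hasDerivWithinAt) fun x hx => sub_neg.2 (strictMono_mul_millsRatio ?_)
    rw [interior_Iic] at hx
    exact sub_neg.1 (hz x ▸ mul_neg_of_pos_of_neg hc (sub_neg.2 hx))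
  have hbot : Tendsto F atBot (𝓝 0) := by
    simpa using (tendsto_normalMills_atBot m₁ hv₁).sub (tendsto_normalMills_atBot m₂ hv₂)
  have hpos : ∃ x, 0 < F x :=
    (eventually_normalMills_lt hv₁ hv m₁ m₂).exists.imp fun _ => sub_pos.2
  simpa [F, sub_eq_zero] using
    existsUnique_eq_zero_of_tendsto_atBot hcont hbot hanti hmono hpos

lemma IsProb.le_one [Fintype α] {P : α → ℝ} (hP : IsProb P) (x : α) : P x ≤ 1 :=
  hP.2 ▸ Finset.single_le_sum (fun y _ => hP.1 y) (Finset.mem_univ x)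

lemma H_pos_of_V_pos [Fintype α] {P : α → ℝ} (hP : IsProb P) (hV : 0 < V P) : 0 < H P := by
  have hterm (x : α) : 0 ≤ -(P x * log (P x)) :=
    neg_nonneg.2 (mul_log_nonpos (hP.1 x) (hP.le_one x))
  refine (Finset.sum_nonneg fun x _ => hterm x).lt_of_ne fun hH => hV.ne' ?_
  have hzero := (Finset.sum_eq_zero_iff_of_nonneg fun x _ => hterm x).1 hH.symm
  rw [V, show H P = 0 from hH.symm]
  refine Finset.sum_eq_zero fun x hx => ?_
  rcases mul_eq_zero.1 (neg_eq_zero.1 (hzero x hx)) with h | h <;> simp [h]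

/-- in the case `H(P)/V(P) > H(Q)/V(Q)`, the equation
`N_P(x)/N_{P,Q,b}(x) = G_P(x)/G_{P,Q,b}(x)` has a unique real solution. -/
theorem unique_threshold_alpha {X Y : Type*} [Fintype X] [Fintype Y]
    (P : X → ℝ) (Q : Y → ℝ) (hP : IsProb P) (hQ : IsProb Q)
    (hVP : 0 < V P) (hVQ : 0 < V Q)
    (hratio : H Q / V Q < H P / V P) (b : ℝ) :
    ∃! x : ℝ, NP P x / NPQ P Q b x = GP P x / GPQ P Q b x := by
  have hHP := H_pos_of_V_pos hP hVP
  have hHQ := H_pos_of_V_pos hQ hVQ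
  have hv₂ : 0 < H P / H Q * V Q := by positivity
  have hv : V P < H P / H Q * V Q := by
    rw [div_lt_div_iff₀ hVQ hVP] at hratio
    rw [div_mul_eq_mul_div, lt_div_iff₀ hHQ]
    linarith
  have hGP (x : ℝ) : GP P x / NP P x = normalMills 0 (V P) x := by
    rw [← stdG_div_normalPDF 0 hVP, sub_zero, GP, NP]
  have hGPQ (x : ℝ) :
      GPQ P Q b x / NPQ P Q b x = normalMills (H Q * b) (H P / H Q * V Q) x := by
    have hinv : H Q / (H P * V Q) = (H P / H Q * V Q)⁻¹ := by field_simp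
    rw [← stdG_div_normalPDF _ hv₂, GPQ, NPQ, hinv, sqrt_inv, inv_mul_eq_div]
  refine (existsUnique_congr fun x => ?_).2 (existsUnique_normalMills_eq hVP hv 0 (H Q * b))
  have hNP : 0 < NP P x := normalPDF_pos 0 hVP x
  have hNPQ : 0 < NPQ P Q b x := normalPDF_pos _ hv₂ x
  have hGPQpos : 0 < GPQ P Q b x := stdG_pos _
  rw [← hGP, ← hGPQ, div_eq_div_iff hNPQ.ne' hGPQpos.ne', div_eq_div_iff hNP.ne' hNPQ.ne']
  constructor <;> intro h <;> linarith

end RNG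
end
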